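/- arXiv:2307.05049 — 5 statements merged into one kernel-verified Lean document; each statement's English description precedes it below -/
import Mathlib

section
/- Let M = (W, R, O, V) be an O-model and E = (S, T, pre, eff) an event O-model such that the product update M ⊗ E is defined. Fix f assigning to agents nonempty sets of agents. If M f-satisfies preservation for everyone (for each i ∈ Dom(f): w R_i u implies O_i(w) ⊆ ⋂_{j ∈ f(i)} O_j(u)) and E f-satisfies EMP^{pres-∀} (for each i ∈ Dom(f): s T_i t implies eff_i^+(s) ⊆ ⋂_{j ∈ f(i)} eff_j^+(t) and ⋃_{j ∈ f(i)} eff_j^-(t) ⊆ eff_i^-(s)), then M ⊗ E f-satisfies preservation for everyone. -/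
/-- closure theorem for product updates of O-models with event O-models. -/
theorem stmt13 {W S O Agt : Type*}
    (R : Agt → W → W → Prop) (Obj : Agt → W → Set O)
    (T : Agt → S → S → Prop) (pre : S → W → Prop)
    (effp effm : Agt → S → Set O)
    (hSfin : Finite S) (hSne : Nonempty S)
    (heff_fin : ∀ (i : Agt) (s : S), (effp i s).Finite ∧ (effm i s).Finite)
    (heff_disj : ∀ (i : Agt) (s : S), effp i s ∩ effm i s = ∅)
    (f : Agt → Set Agt) (Dom : Set Agt) (hDom : Dom.Nonempty)
    (hfne : ∀ i ∈ Dom, (f i).Nonempty)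
    (hdef : ∃ (w : W) (s : S), pre s w)
    (hpresM : ∀ i ∈ Dom, ∀ w u, R i w u → ∀ o ∈ Obj i w, ∀ j ∈ f i, o ∈ Obj j u)
    (hpresE : ∀ i ∈ Dom, ∀ s t, T i s t → (∀ o ∈ effp i s, ∀ j ∈ f i, o ∈ effp j t) ∧ (∀ j ∈ f i, effm j t ⊆ effm i s)) :
    ∀ i ∈ Dom, ∀ w s u t, pre s w → pre t u → R i w u → T i s t → ∀ o ∈ (Obj i w ∪ effp i s) \ effm i s, ∀ j ∈ f i, o ∈ (Obj j u ∪ effp j t) \ effm j t := by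
  intro i hi w s u t _ _ hR hT o ho j hj
  obtain ⟨ho1, ho2⟩ := ho
  refine ⟨?_, fun hm => ho2 ((hpresE i hi s t hT).2 j hj hm)⟩
  cases ho1 with
  | inl h => exact Or.inl (hpresM i hi w u hR o h j hj)
  | inr h => exact Or.inr ((hpresE i hi s t hT).1 o h j hj)
end

section
/- Let M be an O-model and E an event O-model with M ⊗ E defined, and f as above. If M f-satisfies anti-inversion for someone (for each i ∈ Dom(f): w R_i u and o ∉ O_i(w) imply o ∈ ⋃_{j ∈ f(i)} O_j(u)) and E f-satisfies EMP^{anti-inv-∃} (for each i ∈ Dom(f): s T_i t implies eff_i^-(s) ⊆ ⋃_{j ∈ f(i)} eff_j^+(t) and ⋃_{j ∈ f(i)} eff_j^-(t) ⊆ eff_i^+(s)), then M ⊗ E f-satisfies anti-inversion for someone: for each i ∈ Dom(f), (w,s) R'_i (u,t) and o ∉ O'_i(w,s) imply o ∈ O'_j(u,t) for some j ∈ f(i). -/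
/-- closure theorem for product updates of O-models with event O-models. -/
theorem stmt14 {W S O Agt : Type*}
    (R : Agt → W → W → Prop) (Obj : Agt → W → Set O)
    (T : Agt → S → S → Prop) (pre : S → W → Prop)
    (effp effm : Agt → S → Set O)
    (hSfin : Finite S) (hSne : Nonempty S)
    (heff_fin : ∀ (i : Agt) (s : S), (effp i s).Finite ∧ (effm i s).Finite)
    (heff_disj : ∀ (i : Agt) (s : S), effp i s ∩ effm i s = ∅)
    (f : Agt → Set Agt) (Dom : Set Agt) (hDom : Dom.Nonempty)
    (hfne : ∀ i ∈ Dom, (f i).Nonempty)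
    (hdef : ∃ (w : W) (s : S), pre s w)
    (hM : ∀ i ∈ Dom, ∀ w u, R i w u → ∀ o, o ∉ Obj i w → ∃ j ∈ f i, o ∈ Obj j u)
    (hE : ∀ i ∈ Dom, ∀ s t, T i s t → (effm i s ⊆ ⋃ j ∈ f i, effp j t) ∧ (∀ j ∈ f i, effm j t ⊆ effp i s)) :
    ∀ i ∈ Dom, ∀ w s u t, pre s w → pre t u → R i w u → T i s t → ∀ o, o ∉ (Obj i w ∪ effp i s) \ effm i s → ∃ j ∈ f i, o ∈ (Obj j u ∪ effp j t) \ effm j t := by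
  intro i hi w s u t _ _ hR hT o ho
  obtain ⟨h1, h2⟩ := hE i hi s t hT
  by_cases hm : o ∈ effm i s
  · obtain ⟨_, ⟨⟨j, rfl⟩, _, ⟨⟨hj, rfl⟩, hoj⟩⟩⟩ := h1 hm
    refine ⟨j, hj, Or.inr hoj, fun hc => ?_⟩
    have : o ∈ effp i s ∩ effm i s := ⟨h2 j hj hc, hm⟩
    simp [heff_disj i s] at this
  · have ho' : o ∉ Obj i w ∪ effp i s := fun h => ho ⟨h, hm⟩
    have hnp : o ∉ effp i s := fun h => ho' (Or.inr h)
    obtain ⟨j, hj, hoj⟩ := hM i hi w u hR o (fun h => ho' (Or.inl h))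
    exact ⟨j, hj, Or.inl hoj, fun hc => hnp (h2 j hj hc)⟩
end

section
/- Let M be an O-model and E an event O-model with M ⊗ E defined, and f as above. If M f-satisfies anti-preservation for everyone (for each i ∈ Dom(f): w R_i u implies ⋃_{j ∈ f(i)} O_j(u) ⊆ O_i(w)) and E f-satisfies EMP^{anti-pres-∀} (for each i ∈ Dom(f): s T_i t implies ⋃_{j ∈ f(i)} eff_j^+(t) ⊆ eff_i^+(s) and eff_i^-(s) ⊆ ⋂_{j ∈ f(i)} eff_j^-(t)), then M ⊗ E f-satisfies anti-preservation for everyone. -/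
/-- closure theorem for product updates of O-models with event O-models. -/
theorem stmt15 {W S O Agt : Type*}
    (R : Agt → W → W → Prop) (Obj : Agt → W → Set O)
    (T : Agt → S → S → Prop) (pre : S → W → Prop)
    (effp effm : Agt → S → Set O)
    (hSfin : Finite S) (hSne : Nonempty S)
    (heff_fin : ∀ (i : Agt) (s : S), (effp i s).Finite ∧ (effm i s).Finite)
    (heff_disj : ∀ (i : Agt) (s : S), effp i s ∩ effm i s = ∅)
    (f : Agt → Set Agt) (Dom : Set Agt) (hDom : Dom.Nonempty)
    (hfne : ∀ i ∈ Dom, (f i).Nonempty)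
    (hdef : ∃ (w : W) (s : S), pre s w)
    (hM : ∀ i ∈ Dom, ∀ w u, R i w u → ∀ j ∈ f i, Obj j u ⊆ Obj i w)
    (hE : ∀ i ∈ Dom, ∀ s t, T i s t → (∀ j ∈ f i, effp j t ⊆ effp i s) ∧ (effm i s ⊆ ⋂ j ∈ f i, effm j t)) :
    ∀ i ∈ Dom, ∀ w s u t, pre s w → pre t u → R i w u → T i s t → ∀ j ∈ f i, (Obj j u ∪ effp j t) \ effm j t ⊆ (Obj i w ∪ effp i s) \ effm i s := by
  intro i hi w s u t _ _ hR hT j hj x hx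
  obtain ⟨hx1, hx2⟩ := hx
  obtain ⟨hp, hm⟩ := hE i hi s t hT
  constructor
  · rcases hx1 with h | h
    · exact Or.inl (hM i hi w u hR j hj h)
    · exact Or.inr (hp j hj h)
  · intro hmem
    exact hx2 (Set.mem_iInter₂.mp (hm hmem) j hj)
end

section
/- Let M be an O-model and E an event O-model with M ⊗ E defined, and f as above. If M f-satisfies inversion for everyone (for each i ∈ Dom(f): w R_i u implies O_i(w) ∩ ⋃_{j ∈ f(i)} O_j(u) = ∅) and E f-satisfies EMP^{inv-∀} (for each i ∈ Dom(f): s T_i t implies eff_i^+(s) ⊆ ⋂_{j ∈ f(i)} eff_j^-(t) and ⋃_{j ∈ f(i)} eff_j^+(t) ⊆ eff_i^-(s)), then M ⊗ E f-satisfies inversion for everyone. -/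
/-- closure theorem for product updates of O-models with event O-models. -/
theorem stmt16 {W S O Agt : Type*}
    (R : Agt → W → W → Prop) (Obj : Agt → W → Set O)
    (T : Agt → S → S → Prop) (pre : S → W → Prop)
    (effp effm : Agt → S → Set O)
    (hSfin : Finite S) (hSne : Nonempty S)
    (heff_fin : ∀ (i : Agt) (s : S), (effp i s).Finite ∧ (effm i s).Finite)
    (heff_disj : ∀ (i : Agt) (s : S), effp i s ∩ effm i s = ∅)
    (f : Agt → Set Agt) (Dom : Set Agt) (hDom : Dom.Nonempty)
    (hfne : ∀ i ∈ Dom, (f i).Nonempty)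
    (hdef : ∃ (w : W) (s : S), pre s w)
    (hM : ∀ i ∈ Dom, ∀ w u, R i w u → Obj i w ∩ (⋃ j ∈ f i, Obj j u) = ∅)
    (hE : ∀ i ∈ Dom, ∀ s t, T i s t → (effp i s ⊆ ⋂ j ∈ f i, effm j t) ∧ ((⋃ j ∈ f i, effp j t) ⊆ effm i s)) :
    ∀ i ∈ Dom, ∀ w s u t, pre s w → pre t u → R i w u → T i s t → ((Obj i w ∪ effp i s) \ effm i s) ∩ (⋃ j ∈ f i, (Obj j u ∪ effp j t) \ effm j t) = ∅ := by
  intro i hi w s u t hpw hpu hR hT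
  ext x
  simp only [Set.mem_inter_iff, Set.mem_diff, Set.mem_union, Set.mem_iUnion,
    Set.mem_empty_iff_false, iff_false, not_and]
  rintro ⟨hx1, hxm⟩ ⟨j, hj, ⟨hx2, hxmt⟩⟩
  obtain ⟨h1, h2⟩ := hE i hi s t hT
  rcases hx1 with hO | hp
  · rcases hx2 with hO' | hp'
    · have := hM i hi w u hR
      have : x ∈ Obj i w ∩ ⋃ j ∈ f i, Obj j u := ⟨hO, Set.mem_biUnion hj hO'⟩
      simp_all
    · exact hxm (h2 (Set.mem_biUnion hj hp'))
  · exact hxmt (Set.mem_iInter₂.mp (h1 hp) j hj)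
end

section
/- Let M be an O-model and E an event O-model with M ⊗ E defined, and f as above with each f(i) finite. If M f-satisfies preservation for someone (for each i ∈ Dom(f): w R_i u implies O_i(w) ⊆ ⋃_{j ∈ f(i)} O_j(u)) and E f-satisfies EMP^{pres-∃} (for each i ∈ Dom(f): s T_i t implies eff_i^+(s) ⊆ ⋃_{j ∈ f(i)} eff_j^+(t) and ⋃_{j ∈ f(i)} eff_j^-(t) ⊆ eff_i^-(s)), then M ⊗ E f-satisfies preservation for someone. -/
/-- closure theorem for product updates of O-models with event O-models. -/
theorem stmt17 {W S O Agt : Type*}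
    (R : Agt → W → W → Prop) (Obj : Agt → W → Set O)
    (T : Agt → S → S → Prop) (pre : S → W → Prop)
    (effp effm : Agt → S → Set O)
    (hSfin : Finite S) (hSne : Nonempty S)
    (heff_fin : ∀ (i : Agt) (s : S), (effp i s).Finite ∧ (effm i s).Finite)
    (heff_disj : ∀ (i : Agt) (s : S), effp i s ∩ effm i s = ∅)
    (f : Agt → Set Agt) (Dom : Set Agt) (hDom : Dom.Nonempty)
    (hfne : ∀ i ∈ Dom, (f i).Nonempty)
    (hfin : ∀ i ∈ Dom, (f i).Finite)
    (hdef : ∃ (w : W) (s : S), pre s w)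
    (hM : ∀ i ∈ Dom, ∀ w u, R i w u → Obj i w ⊆ ⋃ j ∈ f i, Obj j u)
    (hE : ∀ i ∈ Dom, ∀ s t, T i s t → (effp i s ⊆ ⋃ j ∈ f i, effp j t) ∧ ((⋃ j ∈ f i, effm j t) ⊆ effm i s)) :
    ∀ i ∈ Dom, ∀ w s u t, pre s w → pre t u → R i w u → T i s t → (Obj i w ∪ effp i s) \ effm i s ⊆ ⋃ j ∈ f i, (Obj j u ∪ effp j t) \ effm j t := by
  intro i hi w s u t _ _ hR hT x hx
  obtain ⟨hxin, hxm⟩ := hx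
  have hEm := (hE i hi s t hT).2
  rcases hxin with hO | hP
  · obtain ⟨j, hj, hxj⟩ := Set.mem_iUnion₂.mp (hM i hi w u hR hO)
    exact Set.mem_iUnion₂.mpr ⟨j, hj, Or.inl hxj,
      fun h => hxm (hEm (Set.mem_iUnion₂.mpr ⟨j, hj, h⟩))⟩
  · obtain ⟨j, hj, hxj⟩ := Set.mem_iUnion₂.mp ((hE i hi s t hT).1 hP)
    exact Set.mem_iUnion₂.mpr ⟨j, hj, Or.inr hxj,
      fun h => hxm (hEm (Set.mem_iUnion₂.mpr ⟨j, hj, h⟩))⟩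
end
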